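/- arXiv:1308.0949 — 3 statements merged into one kernel-verified Lean document; each statement's English description precedes it below -/
import Mathlib

section
/- Let R be a commutative ring which, as a ℤ-module, is free with basis (b i)_{i ∈ ι}. Let i₀ ∈ ι, let u ∈ R, let k be a natural number with u * b i₀ = 2^k (i.e. 2^k times the identity of R), and let l be an integer. If there exists w ∈ R with u * w = l (i.e. l times the identity of R), then 2^k divides l in ℤ. -/
theorem Module.Basis.dvd_of_smul_eq_smul_basis {S M ι : Type*} [CommRing S] [AddCommGroup M]
    [Module S M] (b : Module.Basis ι S M) {i : ι} {n l : S} {w : M}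
    (h : n • w = l • b i) : n ∣ l :=
  ⟨b.repr w i, by simpa [mul_comm] using (congrArg (b.repr · i) h).symm⟩

theorem Module.Basis.dvd_of_mul_basis_eq_algebraMap {S R ι : Type*} [CommRing S] [CommRing R]
    [Algebra S R] (b : Module.Basis ι S R) {i : ι} {u w : R} {n l : S}
    (hu : u * b i = algebraMap S R n) (hw : u * w = algebraMap S R l) : n ∣ l := by
  -- both sides equal `u * b i * w`
  have hcross : n • w = l • b i := by
    rw [Algebra.smul_def, Algebra.smul_def, ← hu, ← hw]
    ring
  exact b.dvd_of_smul_eq_smul_basis hcross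

/-- Abstract mechanism of Corollary A.2: let `R` be a commutative ring which is
free as a `ℤ`-module with basis `b`, let `i₀` be a basis index, `u ∈ R`, and
`k : ℕ` with `u * b i₀ = 2^k` (as `2^k` times the identity of `R`). If some
integer `l` (viewed in `R`) is divisible by `u`, then `2^k ∣ l` in `ℤ`. -/
theorem int_pow_two_dvd_of_mul_basis_eq {R : Type*} [CommRing R] {ι : Type*}
    (b : Module.Basis ι ℤ R) (i₀ : ι) (u : R) (k : ℕ)
    (hu : u * b i₀ = (2 : R) ^ k) (l : ℤ)
    (h : ∃ w : R, u * w = (l : R)) :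
    (2 : ℤ) ^ k ∣ l := by
  obtain ⟨w, hw⟩ := h
  exact b.dvd_of_mul_basis_eq_algebraMap (i := i₀) (u := u) (w := w)
    (by simpa using hu) (by simpa using hw)
end

section
/- Let m ≥ 4 be an even natural number and let R be a commutative ring which, as a ℤ-module, is free with basis 1, L, L², …, L^(m−2), X (so m elements in total), and in which L^m = 0 and (2 + L)·X = 2^(m/2). If an integer l, regarded as l times the identity of R, is divisible by 2 + L in R, then 2^(m/2) divides l in ℤ. -/
/-!
Let `N = m / 2`. The `ℤ`-linear map `φ : R → ℤ/2^N` sending `L^k ↦ (-2)^k` for `k ≤ m - 2`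
and `X ↦ 0` satisfies `φ((2 + L) r) = 0` for every `r`, while `φ(l) = l`; hence `2^N ∣ l`.
Checked on the basis, the only nontrivial input is `φ(L^(m-1)) = 0 = (-2)^(m-1)`. It is forced:
multiplying `(2 + L) X = 2^N` by the geometric sum `∑ L^i (-2)^(m-1-i)`, which inverts `2 + L` up
to `-2^m`, and cancelling `2^N` in the torsion-free group `R` gives `2^N X = -∑ L^i (-2)^(m-1-i)`.
Here `φ` kills the left side and every summand except `L^(m-1)`, since `2^N ∣ 2^(m-1)`.
-/

open Finset

section

variable {R : Type*} [CommRing R]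

theorem neg_geom_sum_neg_two_eq_two_pow_mul [Module.IsTorsionFree ℤ R] {L X : R} {N : ℕ}
    (hL : L ^ (2 * N) = 0) (hX : (2 + L) * X = 2 ^ N) :
    -∑ i ∈ range (2 * N), L ^ i * (-2) ^ (2 * N - 1 - i) = 2 ^ N * X := by
  have hgeom := geom_sum₂_mul L (-2 : R) (2 * N)
  set S := ∑ i ∈ range (2 * N), L ^ i * (-2) ^ (2 * N - 1 - i)
  have h : (2 ^ N : ℤ) • (-S) = (2 ^ N : ℤ) • (2 ^ N * X) := by
    rw [zsmul_eq_mul, zsmul_eq_mul]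
    push_cast
    have hsq : (-2 : R) ^ (2 * N) = 2 ^ N * 2 ^ N := by
      rw [(even_two_mul N).neg_pow, two_mul, pow_add]
    linear_combination S * hX - X * hgeom - X * hL + X * hsq
  exact smul_right_injective R (by positivity) h

theorem ZMod.neg_two_pow_eq_zero {N k : ℕ} (hk : N ≤ k) : ((-2) ^ k : ZMod (2 ^ N)) = 0 := by
  obtain ⟨j, rfl⟩ := Nat.exists_eq_add_of_le hk
  have h2N : (2 : ZMod (2 ^ N)) ^ N = 0 := by exact_mod_cast ZMod.natCast_self (2 ^ N)
  rw [neg_pow, pow_add (2 : ZMod _), h2N, zero_mul, mul_zero]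

variable {m : ℕ} (b : Module.Basis (Fin m) ℤ R) (N : ℕ)

noncomputable def negTwoEval : R →ₗ[ℤ] ZMod (2 ^ N) :=
  b.constr ℤ fun i => if (i : ℕ) = m - 1 then 0 else (-2) ^ (i : ℕ)

variable {b N} {L X : R} (hb : ∀ i : Fin m, b i = if (i : ℕ) = m - 1 then X else L ^ (i : ℕ))
include hb

theorem negTwoEval_pow_of_lt {k : ℕ} (hk : k < m - 1) : negTwoEval b N (L ^ k) = (-2) ^ k := by
  have hbk : b ⟨k, by omega⟩ = L ^ k := by simp [hb, hk.ne]
  rw [← hbk, negTwoEval, b.constr_basis]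
  simp [hk.ne]

theorem negTwoEval_X (hm : 0 < m) : negTwoEval b N X = 0 := by
  have hbX : b ⟨m - 1, by omega⟩ = X := by simp [hb]
  rw [← hbX, negTwoEval, b.constr_basis]
  simp

theorem negTwoEval_intCast (hm : 1 < m) (l : ℤ) : negTwoEval b N (l : R) = l := by
  rw [← zsmul_one, map_zsmul, ← pow_zero L, negTwoEval_pow_of_lt hb (by omega), pow_zero,
    zsmul_one]

theorem negTwoEval_pow_pred [Module.IsTorsionFree ℤ R] (hmN : m = 2 * N) (hN : 0 < N)
    (hL : L ^ m = 0) (hX : (2 + L) * X = 2 ^ N) :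
    negTwoEval b N (L ^ (m - 1)) = 0 := by
  subst hmN
  have hterm (i : ℕ) (hi : i < 2 * N - 1) :
      negTwoEval b N (L ^ i * (-2) ^ (2 * N - 1 - i)) = 0 := by
    have hsmul : L ^ i * (-2) ^ (2 * N - 1 - i) = ((-2) ^ (2 * N - 1 - i) : ℤ) • L ^ i := by
      rw [zsmul_eq_mul]
      push_cast
      ring
    rw [hsmul, map_zsmul, negTwoEval_pow_of_lt hb hi, zsmul_eq_mul]
    push_cast
    rw [← pow_add, Nat.sub_add_cancel hi.le, ZMod.neg_two_pow_eq_zero (by omega)]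
  have hsmul : (2 : R) ^ N * X = (2 ^ N : ℤ) • X := by
    rw [zsmul_eq_mul]
    push_cast
    rfl
  have h := congrArg (negTwoEval b N) (neg_geom_sum_neg_two_eq_two_pow_mul hL hX)
  rw [show range (2 * N) = range (2 * N - 1 + 1) by congr 1; omega, sum_range_succ, map_neg,
    map_add, map_sum, sum_eq_zero fun i hi => hterm i (mem_range.1 hi), Nat.sub_self, pow_zero,
    mul_one, zero_add, hsmul, map_zsmul, negTwoEval_X hb (by omega), smul_zero] at h
  exact neg_eq_zero.1 h

theorem negTwoEval_pow [Module.IsTorsionFree ℤ R] (hmN : m = 2 * N) (hN : 0 < N)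
    (hL : L ^ m = 0) (hX : (2 + L) * X = 2 ^ N) (k : ℕ) :
    negTwoEval b N (L ^ k) = (-2) ^ k := by
  subst hmN
  rcases lt_trichotomy k (2 * N - 1) with hk | rfl | hk
  · exact negTwoEval_pow_of_lt hb hk
  · exact (negTwoEval_pow_pred hb rfl hN hL hX).trans (ZMod.neg_two_pow_eq_zero (by omega)).symm
  · rw [pow_eq_zero_of_le (by omega) hL, map_zero, ZMod.neg_two_pow_eq_zero (by omega)]

theorem negTwoEval_two_add_mul [Module.IsTorsionFree ℤ R] (hmN : m = 2 * N) (hN : 0 < N)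
    (hL : L ^ m = 0) (hX : (2 + L) * X = 2 ^ N) (r : R) :
    negTwoEval b N ((2 + L) * r) = 0 := by
  suffices h : (negTwoEval b N).comp (LinearMap.mulLeft ℤ (2 + L)) = 0 from
    LinearMap.congr_fun h r
  refine b.ext fun i => ?_
  rw [LinearMap.comp_apply, LinearMap.mulLeft_apply, LinearMap.zero_apply, hb i]
  split_ifs
  · rw [hX, show (2 : R) ^ N = ((2 ^ N : ℤ) : R) by push_cast; rfl,
      negTwoEval_intCast hb (by omega)]
    exact_mod_cast ZMod.natCast_self (2 ^ N)
  · have hsplit : (2 + L) * L ^ (i : ℕ) = (2 : ℤ) • L ^ (i : ℕ) + L ^ ((i : ℕ) + 1) := by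
      rw [zsmul_eq_mul]
      push_cast
      ring
    rw [hsplit, map_add, map_zsmul, negTwoEval_pow hb hmN hN hL hX,
      negTwoEval_pow hb hmN hN hL hX, zsmul_eq_mul]
    push_cast
    ring

end

/-- Corollary A.2, even-dimensional case: let `m ≥ 4` be even and let `R` be a
commutative ring which is free as a `ℤ`-module with basis
`1, L, L², …, L^(m−2), X` (so `m` elements), in which `L^m = 0` and
`(2 + L) * X = 2^(m/2)`. If an integer `l` (viewed in `R`) is divisible by
`2 + L` in `R`, then `2^(m/2) ∣ l` in `ℤ`. -/
theorem quadric_division_even (m : ℕ) (hm : 4 ≤ m) (hme : Even m)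
    {R : Type*} [CommRing R] (L X : R) (b : Module.Basis (Fin m) ℤ R)
    (hb : ∀ i : Fin m, b i = if (i : ℕ) = m - 1 then X else L ^ (i : ℕ))
    (hL : L ^ m = 0) (hX : (2 + L) * X = (2 : R) ^ (m / 2)) (l : ℤ)
    (h : ∃ w : R, (2 + L) * w = (l : R)) :
    (2 : ℤ) ^ (m / 2) ∣ l := by
  obtain ⟨N, rfl⟩ := hme.two_dvd
  rw [Nat.mul_div_cancel_left N two_pos] at hX ⊢
  have := b.isTorsionFree
  obtain ⟨w, hw⟩ := h
  have hφ := negTwoEval_two_add_mul hb rfl (by omega) hL hX w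
  rw [hw, negTwoEval_intCast hb (by omega)] at hφ
  exact_mod_cast (ZMod.intCast_zmod_eq_zero_iff_dvd l (2 ^ N)).1 hφ
end

section
/- Let m ≥ 3 be an odd natural number and let R be a commutative ring which, as a ℤ-module, is free with basis 1, L, L², …, L^(m−2), X⁺, X⁻ (so m + 1 elements in total), and in which L^m = 0, L·X⁺ = 2^((m−1)/2) − X⁺ − X⁻ and L·X⁻ = 2^((m−1)/2) − X⁺ − X⁻ hold. If an integer l, regarded as l times the identity of R, is divisible by 2 + L in R, then 2^⌊(m+1)/2⌋ divides l in ℤ. -/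
/-- Corollary A.2, odd-dimensional case: let `m ≥ 3` be odd and let `R` be a
commutative ring which is free as a `ℤ`-module with basis
`1, L, L², …, L^(m−2), X⁺, X⁻` (so `m + 1` elements), in which `L^m = 0` and
`L * X⁺ = 2^((m−1)/2) − X⁺ − X⁻` and `L * X⁻ = 2^((m−1)/2) − X⁺ − X⁻`.
If an integer `l` (viewed in `R`) is divisible by `2 + L` in `R`, then
`2^((m+1)/2) ∣ l` in `ℤ`. -/
theorem quadric_division_odd (m : ℕ) (hm : 3 ≤ m) (hmo : Odd m)
    {R : Type*} [CommRing R] (L Xp Xm : R) (b : Module.Basis (Fin (m + 1)) ℤ R)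
    (hb : ∀ i : Fin (m + 1),
      b i = if (i : ℕ) = m - 1 then Xp else if (i : ℕ) = m then Xm
        else L ^ (i : ℕ))
    (hL : L ^ m = 0)
    (hXp : L * Xp = (2 : R) ^ ((m - 1) / 2) - Xp - Xm)
    (hXm : L * Xm = (2 : R) ^ ((m - 1) / 2) - Xp - Xm) (l : ℤ)
    (h : ∃ w : R, (2 + L) * w = (l : R)) :
    (2 : ℤ) ^ ((m + 1) / 2) ∣ l := by
  obtain ⟨w, hw⟩ := h
  set k := (m - 1) / 2 with hk
  have hmk : (m + 1) / 2 = k + 1 := by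
    obtain ⟨t, ht⟩ := hmo; omega
  -- (2 + L) * (Xp + Xm) = 2^(k+1)
  have hX : (2 + L) * (Xp + Xm) = (2 : R) ^ (k + 1) := by
    rw [pow_succ]
    linear_combination hXp + hXm
  -- multiply the divisibility relation by Xp + Xm
  have key : (l : ℤ) • (Xp + Xm) = ((2 : ℤ) ^ (k + 1)) • w := by
    rw [zsmul_eq_mul, zsmul_eq_mul]
    push_cast
    linear_combination w * hX - (Xp + Xm) * hw
  -- indices of the basis vectors Xp and Xm
  have hi1 : m - 1 < m + 1 := by omega
  have hi2 : m < m + 1 := by omega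
  set i1 : Fin (m + 1) := ⟨m - 1, hi1⟩ with hi1d
  set i2 : Fin (m + 1) := ⟨m, hi2⟩ with hi2d
  have hbp : b i1 = Xp := by
    rw [hb]; simp [hi1d]
  have hbm : b i2 = Xm := by
    have hne : m ≠ m - 1 := by omega
    rw [hb]; simp [hi2d, hne]
  have hne12 : i2 ≠ i1 := by
    simp only [hi1d, hi2d, ne_eq, Fin.mk.injEq]
    omega
  -- look at the Xp coordinate
  have hcoord := congrArg (fun r => b.repr r i1) key
  simp only [map_smul, Finsupp.smul_apply, smul_eq_mul] at hcoord
  have hrepr : b.repr (Xp + Xm) i1 = 1 := by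
    rw [← hbp, ← hbm, map_add, b.repr_self, b.repr_self,
      Finsupp.add_apply, Finsupp.single_eq_same, Finsupp.single_eq_of_ne' hne12]
    norm_num
  rw [hrepr, mul_one] at hcoord
  rw [hmk]
  exact ⟨b.repr w i1, hcoord⟩
end
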